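/- On a trivial quantum principal bundle P(B,A,Φ), the map ω_triv(a) = Σ Φ⁻¹(a₍₁₎) d Φ(a₍₂₎) satisfies ω_triv(1) = 0, the verticality condition ~(ω_triv(a)) = 1⊗a − ε(a)⊗1, and Ad_R-covariance Δ_R ω_triv(a) = Σ ω_triv(a₍₂₎) ⊗ (Sa₍₁₎)a₍₃₎; hence it is a connection one-form. -/

import Mathlib

/-!
Everything is computed in convolution algebras `Hom(A, R)`. Writing `x ⊗ y = (x ⊗ 1)(1 ⊗ y)`
turns `(f ⊗ g) ∘ Δ` into the convolution product `(f ⊗ 1) * (1 ⊗ g)`, and `Φ⁻¹ * Φ = ε` gives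
`ω_triv = (Φ⁻¹ ⊗ Φ) ∘ Δ - 1`. The intertwining property gives `Δ_R ∘ Φ = (Φ ⊗ 1) * (1 ⊗ id)`,
and uniqueness of convolution inverses then gives `Δ_R ∘ Φ⁻¹ = (1 ⊗ S) * (Φ⁻¹ ⊗ 1)`.
Since `(1 ⊗ S) * (1 ⊗ id) = 1`, both sides of the covariance identity expand to
`(1 ⊗ S) * (Φ⁻¹ ⊗ 1 ⊗ 1) * (1 ⊗ Φ ⊗ 1) * (1 ⊗ 1 ⊗ id) - 1`.
-/

open TensorProduct

noncomputable def AdR (k A : Type*) [Field k] [Ring A] [HopfAlgebra k A] :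
    A →ₗ[k] A ⊗[k] A :=
  (LinearMap.lTensor A (LinearMap.mul' k A)) ∘ₗ
    (TensorProduct.assoc k A A A).toLinearMap ∘ₗ
    (LinearMap.rTensor A (TensorProduct.comm k A A).toLinearMap) ∘ₗ
    (TensorProduct.assoc k A A A).symm.toLinearMap ∘ₗ
    (LinearMap.rTensor (A ⊗[k] A) (HopfAlgebra.antipode (R := k) (A := A))) ∘ₗ
    (LinearMap.lTensor A (Coalgebra.comul (R := k) (A := A))) ∘ₗ
    (Coalgebra.comul (R := k) (A := A))

/-- The universal differential d u = 1⊗u − u⊗1 on P, valued in P⊗P. -/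
noncomputable def dUniv (k P : Type*) [Field k] [Ring P] [Algebra k P] :
    P →ₗ[k] P ⊗[k] P :=
  TensorProduct.mk k P P 1 - (TensorProduct.mk k P P).flip 1

/-- Left action of P on P⊗P: x·(u⊗v) = xu⊗v. -/
noncomputable def leftAct (k P : Type*) [Field k] [Ring P] [Algebra k P] :
    P ⊗[k] (P ⊗[k] P) →ₗ[k] P ⊗[k] P :=
  (LinearMap.rTensor P (LinearMap.mul' k P)) ∘ₗ
    (TensorProduct.assoc k P P P).symm.toLinearMap

noncomputable def tildeMap {k A P : Type*} [Field k] [Ring A] [HopfAlgebra k A]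
    [Ring P] [Algebra k P] (ΔR : P →ₐ[k] P ⊗[k] A) :
    P ⊗[k] P →ₗ[k] P ⊗[k] A :=
  (LinearMap.rTensor A (LinearMap.mul' k P)) ∘ₗ
    (TensorProduct.assoc k P P A).symm.toLinearMap ∘ₗ
    (LinearMap.lTensor P ΔR.toLinearMap)

noncomputable def diagCoaction {k A P : Type*} [Field k] [Ring A] [HopfAlgebra k A]
    [Ring P] [Algebra k P] (ΔR : P →ₐ[k] P ⊗[k] A) :
    P ⊗[k] P →ₗ[k] (P ⊗[k] P) ⊗[k] A :=
  (LinearMap.lTensor (P ⊗[k] P) (LinearMap.mul' k A)) ∘ₗ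
    (TensorProduct.tensorTensorTensorComm k P A P A).toLinearMap ∘ₗ
    (TensorProduct.map ΔR.toLinearMap ΔR.toLinearMap)

open Coalgebra WithConv

section Convolution

variable {k C M N Q : Type*} [CommSemiring k] [AddCommMonoid C] [Module k C] [Coalgebra k C]

section Semiring

variable [Semiring M] [Algebra k M] [Semiring N] [Algebra k N] [Semiring Q] [Algebra k Q]

theorem comp_map_comp_comul_eq_convMul {Ψ : M ⊗[k] N →ₗ[k] Q} {α : M →ₗ[k] Q}
    {β : N →ₗ[k] Q} (hΨ : ∀ x y, Ψ (x ⊗ₜ y) = α x * β y) (f : C →ₗ[k] M) (g : C →ₗ[k] N) :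
    toConv (Ψ ∘ₗ map f g ∘ₗ comul) = toConv (α ∘ₗ f) * toConv (β ∘ₗ g) := by
  have : Ψ = LinearMap.mul' k Q ∘ₗ map α β := TensorProduct.ext' fun x y => by simp [hΨ]
  rw [LinearMap.convMul_def, this, LinearMap.comp_assoc, map_comp,
    ← LinearMap.comp_assoc _ _ (LinearMap.mul' k Q)]
  rfl

theorem comp_convOne_of_map_one {Ψ : M →ₗ[k] N} (hΨ : Ψ 1 = 1) :
    Ψ ∘ₗ (1 : WithConv (C →ₗ[k] M)).ofConv = (1 : WithConv (C →ₗ[k] N)).ofConv := by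
  ext c
  simp [Algebra.algebraMap_eq_smul_one, hΨ]

theorem toConv_algHom_comp_convMul (h : M →ₐ[k] N) (f g : WithConv (C →ₗ[k] M)) :
    toConv (h.toLinearMap ∘ₗ (f * g).ofConv) =
      toConv (h.toLinearMap ∘ₗ f.ofConv) * toConv (h.toLinearMap ∘ₗ g.ofConv) :=
  WithConv.ext (LinearMap.algHom_comp_convMul_distrib h f g)

theorem algHom_comp_convMul_eq_one (h : M →ₐ[k] N) {f g : C →ₗ[k] M}
    (hfg : toConv f * toConv g = 1) :
    toConv (h.toLinearMap ∘ₗ f) * toConv (h.toLinearMap ∘ₗ g) = 1 := by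
  rw [← toConv_algHom_comp_convMul h (toConv f) (toConv g), hfg,
    comp_convOne_of_map_one (map_one h)]

end Semiring

theorem toConv_comp_sub_convOne [Ring M] [Algebra k M] [Ring N] [Algebra k N]
    {Ψ : M →ₗ[k] N} (hΨ : Ψ 1 = 1) (F : C →ₗ[k] M) :
    toConv (Ψ ∘ₗ (F - (1 : WithConv (C →ₗ[k] M)).ofConv)) = toConv (Ψ ∘ₗ F) - 1 := by
  rw [LinearMap.comp_sub, comp_convOne_of_map_one hΨ]
  rfl

end Convolution

section Bialgebra

variable {k C M : Type*} [CommSemiring k] [Semiring C] [Bialgebra k C] [Semiring M] [Algebra k M]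

theorem map_one_eq_one_of_convMul_eq_one {f g : C →ₗ[k] M} (hfg : toConv f * toConv g = 1)
    (hg : g 1 = 1) : f 1 = 1 := by
  simpa [Algebra.TensorProduct.one_def, hg] using congr($hfg 1)

theorem rTensor_comp_comul_eq_convMul (f : C →ₗ[k] M) :
    toConv (f.rTensor C ∘ₗ comul) =
      toConv ((Algebra.TensorProduct.includeLeft : M →ₐ[k] M ⊗[k] C).toLinearMap ∘ₗ f) *
        toConv (Algebra.TensorProduct.includeRight : C →ₐ[k] M ⊗[k] C).toLinearMap :=
  comp_map_comp_comul_eq_convMul (Ψ := LinearMap.id)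
    (α := (Algebra.TensorProduct.includeLeft : M →ₐ[k] M ⊗[k] C).toLinearMap)
    (β := (Algebra.TensorProduct.includeRight : C →ₐ[k] M ⊗[k] C).toLinearMap)
    (fun x y => by simp [Algebra.TensorProduct.tmul_mul_tmul]) f LinearMap.id

end Bialgebra

theorem includeRight_antipode_convMul_includeRight {k A M : Type*} [CommSemiring k] [Semiring A]
    [HopfAlgebra k A] [Semiring M] [Algebra k M] :
    toConv ((Algebra.TensorProduct.includeRight : A →ₐ[k] M ⊗[k] A).toLinearMap ∘ₗ
        HopfAlgebra.antipode k) *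
      toConv (Algebra.TensorProduct.includeRight : A →ₐ[k] M ⊗[k] A).toLinearMap = 1 := by
  simpa using algHom_comp_convMul_eq_one (Algebra.TensorProduct.includeRight : A →ₐ[k] M ⊗[k] A)
    (LinearMap.antipode_mul_id (R := k) (C := A))

/-- In Sweedler notation: `f a₍₂₎ ⊗ S a₍₁₎ a₍₃₎ = (1 ⊗ S a₍₁₎) (f a₍₂₎ ⊗ 1) (1 ⊗ a₍₃₎)`. -/
theorem rTensor_comp_AdR {k A M : Type*} [Field k] [Ring A] [HopfAlgebra k A] [Semiring M]
    [Algebra k M] (f : A →ₗ[k] M) :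
    toConv (f.rTensor A ∘ₗ AdR k A) =
      toConv ((Algebra.TensorProduct.includeRight : A →ₐ[k] M ⊗[k] A).toLinearMap ∘ₗ
          HopfAlgebra.antipode k) *
        toConv ((Algebra.TensorProduct.includeLeft : M →ₐ[k] M ⊗[k] A).toLinearMap ∘ₗ f) *
        toConv (Algebra.TensorProduct.includeRight : A →ₐ[k] M ⊗[k] A).toLinearMap := by
  set U := (Algebra.TensorProduct.includeRight : A →ₐ[k] M ⊗[k] A).toLinearMap ∘ₗ
    HopfAlgebra.antipode k
  set F := (Algebra.TensorProduct.includeLeft : M →ₐ[k] M ⊗[k] A).toLinearMap ∘ₗ f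
  set Z := (Algebra.TensorProduct.includeRight : A →ₐ[k] M ⊗[k] A).toLinearMap
  have hcore : f.rTensor A ∘ₗ AdR k A = (LinearMap.mul' k (M ⊗[k] A) ∘ₗ
      map U (LinearMap.mul' k (M ⊗[k] A) ∘ₗ map F Z)) ∘ₗ (comul.lTensor A ∘ₗ comul) := by
    unfold AdR
    simp only [← LinearMap.comp_assoc]
    congr 2
    ext x y z
    simp [U, F, Z, Algebra.TensorProduct.tmul_mul_tmul]
  rw [hcore, mul_assoc, LinearMap.convMul_def, LinearMap.convMul_def, LinearMap.comp_assoc,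
    ← LinearMap.comp_assoc comul, LinearMap.map_comp_lTensor, LinearMap.comp_assoc]

/-- In Sweedler notation: `Δ_R (Φ⁻¹ a) = Φ⁻¹ a₍₂₎ ⊗ S a₍₁₎`. Both sides are convolution
inverses of `Δ_R ∘ Φ = (Φ ⊗ id) ∘ Δ`. -/
theorem coaction_comp_convInv_eq {k A P : Type*} [CommSemiring k] [Semiring A] [HopfAlgebra k A]
    [Semiring P] [Algebra k P] {ΔR : P →ₐ[k] P ⊗[k] A} {Φ Φinv : A →ₗ[k] P}
    (hint : ΔR.toLinearMap ∘ₗ Φ = Φ.rTensor A ∘ₗ comul)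
    (hΦ₁ : toConv Φ * toConv Φinv = 1) (hΦ₂ : toConv Φinv * toConv Φ = 1) :
    toConv (ΔR.toLinearMap ∘ₗ Φinv) =
      toConv ((Algebra.TensorProduct.includeRight : A →ₐ[k] P ⊗[k] A).toLinearMap ∘ₗ
          HopfAlgebra.antipode k) *
        toConv ((Algebra.TensorProduct.includeLeft : P →ₐ[k] P ⊗[k] A).toLinearMap ∘ₗ Φinv) := by
  have hright : toConv (ΔR.toLinearMap ∘ₗ Φ) * toConv (ΔR.toLinearMap ∘ₗ Φinv) = 1 :=
    algHom_comp_convMul_eq_one ΔR hΦ₁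
  have hleft : toConv ((Algebra.TensorProduct.includeRight : A →ₐ[k] P ⊗[k] A).toLinearMap ∘ₗ
          HopfAlgebra.antipode k) *
        toConv ((Algebra.TensorProduct.includeLeft : P →ₐ[k] P ⊗[k] A).toLinearMap ∘ₗ Φinv) *
        toConv (ΔR.toLinearMap ∘ₗ Φ) = 1 := by
    rw [hint, rTensor_comp_comul_eq_convMul, ← mul_assoc,
      mul_assoc (toConv _) (toConv (_ ∘ₗ Φinv)), algHom_comp_convMul_eq_one _ hΦ₂, mul_one,
      includeRight_antipode_convMul_includeRight]
  exact (left_inv_eq_right_inv hleft hright).symm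

section Coaction

variable {k A P : Type*} [Field k] [Ring A] [HopfAlgebra k A] [Ring P] [Algebra k P]
  (ΔR : P →ₐ[k] P ⊗[k] A)

theorem tildeMap_tmul (x y : P) :
    tildeMap ΔR (x ⊗ₜ y) = Algebra.TensorProduct.includeLeft (S := k) (B := A) x * ΔR y := by
  simp only [tildeMap, LinearMap.coe_comp, Function.comp_apply, LinearMap.lTensor_tmul,
    AlgHom.toLinearMap_apply]
  induction ΔR y using TensorProduct.induction_on with
  | zero => simp
  | tmul u v => simp [Algebra.TensorProduct.tmul_mul_tmul]
  | add s t hs ht => simp only [TensorProduct.tmul_add, map_add, hs, ht, mul_add]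

theorem diagCoaction_tmul (x y : P) :
    diagCoaction ΔR (x ⊗ₜ y) =
      Algebra.TensorProduct.map (Algebra.TensorProduct.includeLeft (S := k) (B := P))
          (AlgHom.id k A) (ΔR x) *
        Algebra.TensorProduct.map Algebra.TensorProduct.includeRight (AlgHom.id k A) (ΔR y) := by
  have h : (LinearMap.mul' k A).lTensor (P ⊗[k] P) ∘ₗ
      (TensorProduct.tensorTensorTensorComm k P A P A).toLinearMap =
      LinearMap.mul' k ((P ⊗[k] P) ⊗[k] A) ∘ₗ
        map (Algebra.TensorProduct.map (Algebra.TensorProduct.includeLeft (S := k) (B := P))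
            (AlgHom.id k A)).toLinearMap
          (Algebra.TensorProduct.map Algebra.TensorProduct.includeRight
            (AlgHom.id k A)).toLinearMap := by
    ext
    simp [Algebra.TensorProduct.tmul_mul_tmul]
  exact congr($h (ΔR x ⊗ₜ ΔR y))

end Coaction

section TrivialConnection

variable {k A P : Type*} [Field k] [Ring P] [Algebra k P]

noncomputable def trivialConnection [AddCommMonoid A] [Module k A] [Coalgebra k A]
    (Φ Φinv : A →ₗ[k] P) : A →ₗ[k] P ⊗[k] P :=
  leftAct k P ∘ₗ map Φinv (dUniv k P ∘ₗ Φ) ∘ₗ comul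

theorem trivialConnection_eq [AddCommMonoid A] [Module k A] [Coalgebra k A]
    {Φ Φinv : A →ₗ[k] P} (hΦ₂ : toConv Φinv * toConv Φ = 1) :
    trivialConnection Φ Φinv =
      map Φinv Φ ∘ₗ comul - (1 : WithConv (A →ₗ[k] P ⊗[k] P)).ofConv := by
  have hd : leftAct k P ∘ₗ map Φinv (dUniv k P ∘ₗ Φ) =
      (LinearMap.id - (Algebra.TensorProduct.includeLeft : P →ₐ[k] P ⊗[k] P).toLinearMap ∘ₗ
        LinearMap.mul' k P) ∘ₗ map Φinv Φ := by
    ext x y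
    simp [leftAct, dUniv, TensorProduct.tmul_sub]
  rw [trivialConnection, ← LinearMap.comp_assoc, hd, LinearMap.comp_assoc, LinearMap.sub_comp,
    LinearMap.id_comp]
  congr 1
  change (Algebra.TensorProduct.includeLeft : P →ₐ[k] P ⊗[k] P).toLinearMap ∘ₗ
    (toConv Φinv * toConv Φ).ofConv = _
  rw [hΦ₂, comp_convOne_of_map_one (map_one (Algebra.TensorProduct.includeLeft : P →ₐ[k] P ⊗[k] P))]

variable [Ring A] [HopfAlgebra k A] {ΔR : P →ₐ[k] P ⊗[k] A} {Φ Φinv : A →ₗ[k] P}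

theorem trivialConnection_one (hΦone : Φ 1 = 1) (hΦ₂ : toConv Φinv * toConv Φ = 1) :
    trivialConnection Φ Φinv 1 = 0 := by
  simp [trivialConnection_eq hΦ₂, Algebra.TensorProduct.one_def, hΦone,
    map_one_eq_one_of_convMul_eq_one hΦ₂ hΦone]

theorem tildeMap_comp_trivialConnection (hint : ΔR.toLinearMap ∘ₗ Φ = Φ.rTensor A ∘ₗ comul)
    (hΦ₂ : toConv Φinv * toConv Φ = 1) :
    tildeMap ΔR ∘ₗ trivialConnection Φ Φinv =
      TensorProduct.mk k P A 1 - Algebra.linearMap k (P ⊗[k] A) ∘ₗ Coalgebra.counit := by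
  apply WithConv.toConv_injective
  rw [trivialConnection_eq hΦ₂,
    toConv_comp_sub_convOne (by simp [Algebra.TensorProduct.one_def, tildeMap_tmul]),
    comp_map_comp_comul_eq_convMul
      (α := (Algebra.TensorProduct.includeLeft : P →ₐ[k] P ⊗[k] A).toLinearMap)
      (β := ΔR.toLinearMap) (tildeMap_tmul ΔR), hint, rTensor_comp_comul_eq_convMul,
    ← mul_assoc, algHom_comp_convMul_eq_one _ hΦ₂, one_mul]
  rfl

open Algebra.TensorProduct in
theorem diagCoaction_comp_trivialConnection (hint : ΔR.toLinearMap ∘ₗ Φ = Φ.rTensor A ∘ₗ comul)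
    (hΦ₁ : toConv Φ * toConv Φinv = 1) (hΦ₂ : toConv Φinv * toConv Φ = 1) :
    diagCoaction ΔR ∘ₗ trivialConnection Φ Φinv =
      (trivialConnection Φ Φinv).rTensor A ∘ₗ AdR k A := by
  set L := map (includeLeft : P →ₐ[k] P ⊗[k] P) (AlgHom.id k A)
  set R := map (includeRight : P →ₐ[k] P ⊗[k] P) (AlgHom.id k A)
  set ι := (includeLeft : P ⊗[k] P →ₐ[k] (P ⊗[k] P) ⊗[k] A)
  set U := toConv ((includeRight : A →ₐ[k] (P ⊗[k] P) ⊗[k] A).toLinearMap ∘ₗ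
    HopfAlgebra.antipode k)
  set V := toConv (ι.toLinearMap ∘ₗ (includeLeft : P →ₐ[k] P ⊗[k] P).toLinearMap ∘ₗ Φinv)
  set W := toConv (ι.toLinearMap ∘ₗ (includeRight : P →ₐ[k] P ⊗[k] P).toLinearMap ∘ₗ Φ)
  set Z := toConv (includeRight : A →ₐ[k] (P ⊗[k] P) ⊗[k] A).toLinearMap
  have hUV : toConv (L.toLinearMap ∘ₗ ΔR.toLinearMap ∘ₗ Φinv) = U * V := by
    calc _ = toConv (L.toLinearMap ∘ₗ (toConv (ΔR.toLinearMap ∘ₗ Φinv)).ofConv) := rfl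
      _ = U * V := by
        rw [coaction_comp_convInv_eq hint hΦ₁ hΦ₂, toConv_algHom_comp_convMul]
        rfl
  have hWZ : toConv (R.toLinearMap ∘ₗ ΔR.toLinearMap ∘ₗ Φ) = W * Z := by
    calc _ = toConv (R.toLinearMap ∘ₗ (toConv (ΔR.toLinearMap ∘ₗ Φ)).ofConv) := rfl
      _ = W * Z := by
        rw [hint, rTensor_comp_comul_eq_convMul, toConv_algHom_comp_convMul]
        rfl
  have hlhs : toConv (diagCoaction ΔR ∘ₗ trivialConnection Φ Φinv) = U * V * (W * Z) - 1 := by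
    rw [trivialConnection_eq hΦ₂,
      toConv_comp_sub_convOne (by simp [one_def, diagCoaction_tmul]),
      comp_map_comp_comul_eq_convMul (α := L.toLinearMap ∘ₗ ΔR.toLinearMap)
        (β := R.toLinearMap ∘ₗ ΔR.toLinearMap) (diagCoaction_tmul ΔR), LinearMap.comp_assoc,
      LinearMap.comp_assoc, hUV, hWZ]
  have hrhs : toConv ((trivialConnection Φ Φinv).rTensor A ∘ₗ AdR k A) = U * (V * W - 1) * Z := by
    rw [rTensor_comp_AdR, trivialConnection_eq hΦ₂, toConv_comp_sub_convOne (map_one ι),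
      comp_map_comp_comul_eq_convMul (α := ι.toLinearMap ∘ₗ includeLeft.toLinearMap)
        (β := ι.toLinearMap ∘ₗ includeRight.toLinearMap) (by simp [ι, tmul_mul_tmul])]
    rfl
  have hUZ : U * Z = 1 := includeRight_antipode_convMul_includeRight
  apply WithConv.toConv_injective
  rw [hlhs, hrhs, mul_sub U (V * W) 1, sub_mul (U * (V * W)) (U * 1) Z, mul_one U, hUZ]
  simp only [mul_assoc]

end TrivialConnection

theorem trivial_connection_form_general
    {k A P : Type*} [Field k] [Ring A] [HopfAlgebra k A]
    [Ring P] [Algebra k P]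
    (ΔR : P →ₐ[k] P ⊗[k] A)
    (Φ Φinv : A →ₗ[k] P)
    (hint : ΔR.toLinearMap ∘ₗ Φ = (Φ.rTensor A) ∘ₗ Coalgebra.comul)
    (hΦone : Φ 1 = 1)
    (hΦ₁ : (LinearMap.mul' k P) ∘ₗ (TensorProduct.map Φ Φinv) ∘ₗ Coalgebra.comul =
        (Algebra.linearMap k P) ∘ₗ Coalgebra.counit)
    (hΦ₂ : (LinearMap.mul' k P) ∘ₗ (TensorProduct.map Φinv Φ) ∘ₗ Coalgebra.comul =
        (Algebra.linearMap k P) ∘ₗ Coalgebra.counit) :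
    -- ω_triv(a) = Σ Φ⁻¹(a₍₁₎) · dΦ(a₍₂₎)
    let ωtriv : A →ₗ[k] P ⊗[k] P :=
      (leftAct k P) ∘ₗ (TensorProduct.map Φinv ((dUniv k P) ∘ₗ Φ)) ∘ₗ
        Coalgebra.comul
    (ωtriv 1 = 0) ∧
    (tildeMap ΔR ∘ₗ ωtriv =
      TensorProduct.mk k P A 1 -
        (Algebra.linearMap k (P ⊗[k] A)) ∘ₗ Coalgebra.counit) ∧
    (diagCoaction ΔR ∘ₗ ωtriv = (ωtriv.rTensor A) ∘ₗ AdR k A) := by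
  intro ωtriv
  have hinv₁ : toConv Φ * toConv Φinv = 1 := WithConv.ext hΦ₁
  have hinv₂ : toConv Φinv * toConv Φ = 1 := WithConv.ext hΦ₂
  exact ⟨trivialConnection_one hΦone hinv₂, tildeMap_comp_trivialConnection hint hinv₂,
    diagCoaction_comp_trivialConnection hint hinv₁ hinv₂⟩

theorem trivial_connection_form
    {k A P : Type*} [Field k] [Ring A] [HopfAlgebra k A]
    [Ring P] [Algebra k P]
    (ΔR : P →ₐ[k] P ⊗[k] A)
    (hcoassoc : (TensorProduct.assoc k P A A).toLinearMap ∘ₗ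
        (ΔR.toLinearMap.rTensor A) ∘ₗ ΔR.toLinearMap =
        ((Coalgebra.comul (R := k) (A := A)).lTensor P) ∘ₗ ΔR.toLinearMap)
    (hcounit : (TensorProduct.rid k P).toLinearMap ∘ₗ
        ((Coalgebra.counit (R := k) (A := A)).lTensor P) ∘ₗ ΔR.toLinearMap =
        LinearMap.id)
    (Φ Φinv : A →ₗ[k] P)
    (hint : ΔR.toLinearMap ∘ₗ Φ = (Φ.rTensor A) ∘ₗ Coalgebra.comul)
    (hΦone : Φ 1 = 1)
    (hΦ₁ : (LinearMap.mul' k P) ∘ₗ (TensorProduct.map Φ Φinv) ∘ₗ Coalgebra.comul =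
        (Algebra.linearMap k P) ∘ₗ Coalgebra.counit)
    (hΦ₂ : (LinearMap.mul' k P) ∘ₗ (TensorProduct.map Φinv Φ) ∘ₗ Coalgebra.comul =
        (Algebra.linearMap k P) ∘ₗ Coalgebra.counit) :
    -- ω_triv(a) = Σ Φ⁻¹(a₍₁₎) · dΦ(a₍₂₎)
    let ωtriv : A →ₗ[k] P ⊗[k] P :=
      (leftAct k P) ∘ₗ (TensorProduct.map Φinv ((dUniv k P) ∘ₗ Φ)) ∘ₗ
        Coalgebra.comul
    (ωtriv 1 = 0) ∧
    (tildeMap ΔR ∘ₗ ωtriv =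
      TensorProduct.mk k P A 1 -
        (Algebra.linearMap k (P ⊗[k] A)) ∘ₗ Coalgebra.counit) ∧
    (diagCoaction ΔR ∘ₗ ωtriv = (ωtriv.rTensor A) ∘ₗ AdR k A) :=
  trivial_connection_form_general ΔR Φ Φinv hint hΦone hΦ₁ hΦ₂
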